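/- (Thomas–Fermi energy equals Vlasov energy.) The Thomas–Fermi energy E^TF is equal to the Vlasov energy E^V = inf{ (2π)^{−3} ∬_{ℝ³×ℝ³} (|p|² + V(x)) m(x,p) dx dp : m measurable, 0 ≤ m ≤ 2 a.e., (2π)^{−3} ∬_{ℝ³×ℝ³} m(x,p) dx dp = 1 }. -/

import Mathlib

open MeasureTheory Filter Topology

noncomputable section

/-- Position space `ℝ³`. -/
abbrev E3 := EuclideanSpace ℝ (Fin 3)

/-- The Thomas–Fermi constant `c_TF = (3/5)(6π²)^{2/3}`. -/
def cTF : ℝ := (3/5) * (6 * Real.pi ^ 2) ^ ((2:ℝ)/3)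

/-- The Thomas–Fermi functional `𝓔^TF[ρ] = 2^{-2/3} c_TF ∫ ρ^{5/3} + ∫ V ρ`. -/
def TFfun (V ρ : E3 → ℝ) : ℝ :=
  (2:ℝ) ^ (-(2:ℝ)/3) * cTF * (∫ x, ρ x ^ ((5:ℝ)/3)) + ∫ x, V x * ρ x

/-- Admissible densities for the Thomas–Fermi problem: nonnegative, in `L^{5/3}`,
with finite potential energy and total mass one. -/
def IsTFAdmissible (V ρ : E3 → ℝ) : Prop :=
  Measurable ρ ∧ (∀ x, 0 ≤ ρ x) ∧ MemLp ρ (5/3) volume ∧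
    Integrable (fun x => V x * ρ x) volume ∧ (∫ x, ρ x) = 1

/-- The Thomas–Fermi energy `E^TF`. -/
def TFenergy (V : E3 → ℝ) : ℝ :=
  sInf { e | ∃ ρ, IsTFAdmissible V ρ ∧ e = TFfun V ρ }

/-- `ρ` is a minimizer of the Thomas–Fermi functional. -/
def IsTFMinimizer (V ρ : E3 → ℝ) : Prop :=
  IsTFAdmissible V ρ ∧ TFfun V ρ = TFenergy V

/-- `V` is locally bounded (`V ∈ L^∞_loc`). -/
def LocBounded (V : E3 → ℝ) : Prop :=
  ∀ K : Set E3, IsCompact K → ∃ C : ℝ, ∀ x ∈ K, |V x| ≤ C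

/-- The set of Vlasov energies of admissible phase-space densities `0 ≤ m ≤ 2`
with `(2π)^{-3} ∬ m = 1`. -/
def vlasovSet (V : E3 → ℝ) : Set ℝ :=
  { e | ∃ m : E3 × E3 → ℝ, Measurable m ∧
      (∀ᵐ z ∂volume, 0 ≤ m z ∧ m z ≤ 2) ∧
      Integrable m volume ∧
      Integrable (fun z : E3 × E3 => (‖z.2‖ ^ 2 + V z.1) * m z) volume ∧
      ((2 * Real.pi) ^ 3)⁻¹ * (∫ z, m z) = 1 ∧
      e = ((2 * Real.pi) ^ 3)⁻¹ * ∫ z : E3 × E3, (‖z.2‖ ^ 2 + V z.1) * m z }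

section AuxTFVlasov
open Real Set
open scoped ENNReal

lemma gamma52 : Real.Gamma ((3:ℝ)/2 + 1) = 3/4 * Real.sqrt π := by
  rw [Real.Gamma_add_one (by norm_num)]
  have h32 : (3:ℝ)/2 = 1/2 + 1 := by norm_num
  rw [h32, Real.Gamma_add_one (by norm_num), Real.Gamma_one_half_eq]
  ring

lemma vol_ball3 (r : ℝ) :
    volume (Metric.closedBall (0:E3) r) = ENNReal.ofReal (4/3 * π * r^3) := by
  rw [EuclideanSpace.volume_closedBall]
  rcases le_or_gt r 0 with hr | hr
  · rcases eq_or_lt_of_le hr with h | h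
    · subst_vars; simp
    · rw [ENNReal.ofReal_eq_zero.mpr hr]
      have : 4/3 * π * r^3 ≤ 0 := by nlinarith [Real.pi_pos, pow_pos (neg_pos.2 h) 3]
      rw [ENNReal.ofReal_eq_zero.mpr this]
      simp
  · have hcard : (Fintype.card (Fin 3) : ℝ) = 3 := by simp
    simp only [Fintype.card_fin]
    rw [← ENNReal.ofReal_pow hr.le, ← ENNReal.ofReal_mul (by positivity)]
    congr 1
    have h3 : ((3:ℕ):ℝ)/2 + 1 = (3:ℝ)/2 + 1 := by norm_num
    rw [h3, gamma52]
    have hs : Real.sqrt π ^ 3 = π * Real.sqrt π := by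
      rw [pow_succ, sq_sqrt Real.pi_pos.le]
    rw [hs]
    have hsq : Real.sqrt π > 0 := Real.sqrt_pos.2 Real.pi_pos
    field_simp

lemma vol_unit_ball3 : (volume (Metric.ball (0:E3) 1)).toReal = 4/3 * π := by
  rw [← Measure.addHaar_closedBall_eq_addHaar_ball, vol_ball3]
  rw [ENNReal.toReal_ofReal (by positivity)]
  norm_num

lemma integral_normsq_ball (r : ℝ) (hr : 0 ≤ r) :
    ∫ p in Metric.closedBall (0:E3) r, ‖p‖^2 = 4*π/5 * r^5 := by
  have key := MeasureTheory.integral_fun_norm_addHaar (volume : Measure E3)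
    ((Icc (0:ℝ) r).indicator (fun t => t^2))
  have hdim : Module.finrank ℝ E3 = 3 := finrank_euclideanSpace_fin
  rw [hdim] at key
  have hL : (∫ x : E3, (Icc (0:ℝ) r).indicator (fun t => t^2) ‖x‖)
      = ∫ p in Metric.closedBall (0:E3) r, ‖p‖^2 := by
    rw [← MeasureTheory.integral_indicator (measurableSet_closedBall)]
    congr 1 with x
    by_cases hx : ‖x‖ ≤ r
    · rw [Set.indicator_of_mem (by exact ⟨norm_nonneg _, hx⟩),
        Set.indicator_of_mem (by rwa [Metric.mem_closedBall, dist_zero_right])]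
    · rw [Set.indicator_of_notMem (by simp [hx]),
        Set.indicator_of_notMem (by rwa [Metric.mem_closedBall, dist_zero_right])]
  have hR : (∫ y in Ioi (0:ℝ), y ^ (3-1) • (Icc (0:ℝ) r).indicator (fun t => t^2) y)
      = r^5/5 := by
    have : ∀ y : ℝ, y ^ (3-1) • (Icc (0:ℝ) r).indicator (fun t => t^2) y
        = (Icc (0:ℝ) r).indicator (fun t => t^2 * t^2) y := by
      intro y
      by_cases hy : y ∈ Icc (0:ℝ) r
      · rw [Set.indicator_of_mem hy, Set.indicator_of_mem hy]; simp [smul_eq_mul]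
      · rw [Set.indicator_of_notMem hy, Set.indicator_of_notMem hy]; simp
    simp_rw [this]
    rw [MeasureTheory.integral_indicator measurableSet_Icc, Measure.restrict_restrict
      measurableSet_Icc]
    have hIcc : Icc (0:ℝ) r ∩ Ioi 0 = Ioc 0 r := by
      ext y; constructor
      · rintro ⟨⟨_, h2⟩, h3⟩; exact ⟨h3, h2⟩
      · rintro ⟨h1, h2⟩; exact ⟨⟨h1.le, h2⟩, h1⟩
    rw [hIcc, ← intervalIntegral.integral_of_le hr]
    have : ∀ t : ℝ, t^2 * t^2 = t^4 := fun t => by ring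
    simp_rw [this]
    rw [integral_pow]
    norm_num
  rw [hL, hR, measureReal_def, vol_unit_ball3] at key
  rw [key]
  simp only [smul_eq_mul, nsmul_eq_mul]
  push_cast
  ring


lemma rad_nonneg (t : ℝ) (h : 0 ≤ t) : 0 ≤ (3*π^2*t)^((1:ℝ)/3) :=
  Real.rpow_nonneg (by positivity) _

lemma rad_cube (t : ℝ) (h : 0 ≤ t) : ((3*π^2*t)^((1:ℝ)/3))^3 = 3*π^2*t := by
  have hb : (0:ℝ) ≤ 3*π^2*t := by positivity
  rw [← Real.rpow_natCast ((3*π^2*t)^((1:ℝ)/3)) 3, ← Real.rpow_mul hb]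
  norm_num

lemma rad_pow5 (t : ℝ) (h : 0 ≤ t) :
    ((3*π^2*t)^((1:ℝ)/3))^5 = (3*π^2)^((5:ℝ)/3) * t^((5:ℝ)/3) := by
  have hb : (0:ℝ) ≤ 3*π^2*t := by positivity
  have h1 : ((3*π^2*t)^((1:ℝ)/3))^5 = (3*π^2*t)^((5:ℝ)/3) := by
    rw [← Real.rpow_natCast ((3*π^2*t)^((1:ℝ)/3)) 5, ← Real.rpow_mul hb]
    norm_num
  rw [h1, Real.mul_rpow (by positivity) h]

lemma const_mass (t : ℝ) (h : 0 ≤ t) :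
    2 * (4/3 * π * ((3*π^2*t)^((1:ℝ)/3))^3) = (2*π)^3 * t := by
  rw [rad_cube t h]; ring

lemma const_kin (t : ℝ) (h : 0 ≤ t) :
    2 * (4*π/5 * ((3*π^2*t)^((1:ℝ)/3))^5)
      = (2*π)^3 * ((2:ℝ)^(-(2:ℝ)/3) * cTF * t^((5:ℝ)/3)) := by
  rw [rad_pow5 t h, cTF]
  have h6 : ((6:ℝ) * π^2) ^ ((2:ℝ)/3) = (2:ℝ)^((2:ℝ)/3) * ((3:ℝ)*π^2)^((2:ℝ)/3) := by
    rw [show (6 * π^2 : ℝ) = 2 * (3 * π^2) by ring,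
      Real.mul_rpow (by norm_num) (by positivity)]
  have h53 : ((3:ℝ)*π^2)^((5:ℝ)/3) = (3*π^2) * ((3:ℝ)*π^2)^((2:ℝ)/3) := by
    rw [← Real.rpow_one_add' (by positivity) (by norm_num)]
    norm_num
  have h2 : (2:ℝ)^(-(2:ℝ)/3) * (2:ℝ)^((2:ℝ)/3) = 1 := by
    rw [← Real.rpow_add (by norm_num)]; norm_num
  rw [h6, h53]
  linear_combination (-(24/5)*π^3*((3:ℝ)*π^2)^((2:ℝ)/3)*t^((5:ℝ)/3)) * h2

/-- The model profile `2 · 1_{closedBall 0 r}`. -/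
def bump (r : ℝ) : E3 → ℝ := (Metric.closedBall (0:E3) r).indicator (fun _ => (2:ℝ))

lemma bump_integrable (r : ℝ) : Integrable (bump r) volume := by
  apply MeasureTheory.IntegrableOn.integrable_indicator _ measurableSet_closedBall
  exact (integrableOn_const (by rw [vol_ball3]; exact ENNReal.ofReal_ne_top))

lemma bump_integral (r : ℝ) (hr : 0 ≤ r) : ∫ p, bump r p = 2*(4/3*π*r^3) := by
  rw [bump, MeasureTheory.integral_indicator_const _ measurableSet_closedBall, measureReal_def, vol_ball3,
    ENNReal.toReal_ofReal (by positivity)]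
  simp [smul_eq_mul]; ring

lemma bump_sq_eq (r : ℝ) : (fun p : E3 => ‖p‖^2 * bump r p)
    = (Metric.closedBall (0:E3) r).indicator (fun p => ‖p‖^2 * 2) := by
  ext p
  by_cases hp : p ∈ Metric.closedBall (0:E3) r
  · rw [bump, Set.indicator_of_mem hp, Set.indicator_of_mem hp]
  · rw [bump, Set.indicator_of_notMem hp, Set.indicator_of_notMem hp, mul_zero]

lemma bump_sq_integrable (r : ℝ) : Integrable (fun p : E3 => ‖p‖^2 * bump r p) volume := by
  rw [bump_sq_eq]
  apply MeasureTheory.IntegrableOn.integrable_indicator _ measurableSet_closedBall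
  exact ((continuous_norm.pow 2).mul continuous_const).continuousOn.integrableOn_compact
    (isCompact_closedBall _ _)

lemma bump_sq_integral (r : ℝ) (hr : 0 ≤ r) :
    ∫ p, ‖p‖^2 * bump r p = 2*(4*π/5*r^5) := by
  rw [bump_sq_eq, MeasureTheory.integral_indicator measurableSet_closedBall]
  have : ∫ p in Metric.closedBall (0:E3) r, ‖p‖^2 * 2
      = 2 * ∫ p in Metric.closedBall (0:E3) r, ‖p‖^2 := by
    rw [← integral_const_mul]; congr 1 with p; ring
  rw [this, integral_normsq_ball r hr]

/-- The bathtub principle, pointwise form. -/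
lemma bathtub (g : E3 → ℝ) (hgi : Integrable g volume)
    (hg : ∀ᵐ p : E3 ∂volume, 0 ≤ g p ∧ g p ≤ 2)
    (hki : Integrable (fun p : E3 => ‖p‖^2 * g p) volume)
    (r : ℝ) (hr : 0 ≤ r) (hmass : ∫ p, g p = 2*(4/3*π*r^3)) :
    2*(4*π/5*r^5) ≤ ∫ p, ‖p‖^2 * g p := by
  have h1 : Integrable (fun p : E3 => r^2 * (g p - bump r p)) volume :=
    ((hgi.sub (bump_integrable r)).const_mul _)
  have h2 : Integrable (fun p : E3 => ‖p‖^2 * (g p - bump r p)) volume := by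
    have : (fun p : E3 => ‖p‖^2 * (g p - bump r p))
        = fun p => ‖p‖^2 * g p - ‖p‖^2 * bump r p := by ext p; ring
    rw [this]; exact hki.sub (bump_sq_integrable r)
  have hpt : ∀ᵐ p : E3 ∂volume,
      r^2 * (g p - bump r p) ≤ ‖p‖^2 * (g p - bump r p) := by
    filter_upwards [hg] with p ⟨hp0, hp2⟩
    by_cases hp : p ∈ Metric.closedBall (0:E3) r
    · have hb : bump r p = 2 := Set.indicator_of_mem hp _
      have hnr : ‖p‖ ≤ r := by rwa [Metric.mem_closedBall, dist_zero_right] at hp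
      have hsq : ‖p‖^2 ≤ r^2 := by nlinarith [norm_nonneg p]
      have hneg : g p - bump r p ≤ 0 := by rw [hb]; linarith
      nlinarith
    · have hb : bump r p = 0 := Set.indicator_of_notMem hp _
      have hnr : r ≤ ‖p‖ := by
        rw [Metric.mem_closedBall, dist_zero_right, not_le] at hp; exact hp.le
      have hsq : r^2 ≤ ‖p‖^2 := by nlinarith
      have hpos : 0 ≤ g p - bump r p := by rw [hb]; linarith
      nlinarith
  have hint := MeasureTheory.integral_mono_ae h1 h2 hpt
  rw [MeasureTheory.integral_const_mul,
    MeasureTheory.integral_sub hgi (bump_integrable r)] at hint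
  rw [hmass, bump_integral r hr, sub_self, mul_zero] at hint
  have : (fun p : E3 => ‖p‖^2 * (g p - bump r p))
      = fun p => ‖p‖^2 * g p - ‖p‖^2 * bump r p := by ext p; ring
  rw [this, MeasureTheory.integral_sub hki (bump_sq_integrable r),
    bump_sq_integral r hr] at hint
  linarith

lemma cTF_pos : 0 < cTF := by
  unfold cTF
  have := Real.rpow_pos_of_pos (show (0:ℝ) < 6 * π^2 by positivity) ((2:ℝ)/3)
  positivity

lemma aTF_pos : 0 < (2:ℝ) ^ (-(2:ℝ)/3) * cTF :=
  mul_pos (Real.rpow_pos_of_pos (by norm_num) _) cTF_pos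

lemma twopi3_pos : (0:ℝ) < (2*π)^3 := by positivity

/-- exponent bookkeeping : `(5/3 : ℝ≥0∞).toReal = 5/3`. -/
lemma toReal_53 : ((5:ℝ≥0∞)/3).toReal = (5:ℝ)/3 := by
  rw [ENNReal.toReal_div]; norm_num

lemma memLp53_iff (ρ : E3 → ℝ) (hρm : Measurable ρ) (hρ0 : ∀ x, 0 ≤ ρ x) :
    MemLp ρ (5/3) volume ↔ Integrable (fun x => ρ x ^ ((5:ℝ)/3)) volume := by
  have h := memLp_norm_rpow_iff (q := 5/3) (p := 5/3) (μ := (volume : Measure E3))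
    hρm.aestronglyMeasurable (by norm_num) (by simp [ENNReal.div_eq_top])
  rw [ENNReal.div_self (by norm_num) (by simp [ENNReal.div_eq_top])] at h
  rw [← h, memLp_one_iff_integrable]
  have : (fun x => ‖ρ x‖ ^ ((5:ℝ≥0∞)/3).toReal) = fun x => ρ x ^ ((5:ℝ)/3) := by
    ext x; rw [toReal_53, Real.norm_of_nonneg (hρ0 x)]
  rw [this]

/-- Integrability of `ρ^{5/3}` from admissibility. -/
lemma rho53_integrable {V ρ : E3 → ℝ} (h : IsTFAdmissible V ρ) :
    Integrable (fun x => ρ x ^ ((5:ℝ)/3)) volume :=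
  (memLp53_iff ρ h.1 h.2.1).mp h.2.2.1

/-- Admissible densities are integrable (uses `V ≥ 1` off a compact set). -/
lemma rho_integrable {V ρ : E3 → ℝ}
    (hVinf : Tendsto V (cocompact E3) atTop) (h : IsTFAdmissible V ρ) :
    Integrable ρ volume := by
  obtain ⟨hρm, hρ0, hρp, hVρ, _⟩ := h
  have h1 : ∀ᶠ x in cocompact E3, 1 ≤ V x := hVinf.eventually_ge_atTop 1
  rw [Filter.eventually_iff, Filter.mem_cocompact] at h1
  obtain ⟨K, hK, hKsub⟩ := h1
  have hKm : MeasurableSet K := hK.isClosed.measurableSet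
  have hfin : IsFiniteMeasure (volume.restrict K) :=
    ⟨by rw [Measure.restrict_apply_univ]; exact hK.measure_lt_top⟩
  have hIK : IntegrableOn ρ K volume := by
    have := (hρp.restrict K).mono_exponent (p := 1)
      (by rw [ENNReal.le_div_iff_mul_le (Or.inl (by norm_num)) (Or.inl (by norm_num))]; norm_num)
    exact memLp_one_iff_integrable.mp this
  have hIKc : IntegrableOn ρ Kᶜ volume := by
    refine Integrable.mono' (hVρ.restrict (s := Kᶜ)) hρm.aestronglyMeasurable.restrict ?_
    filter_upwards [ae_restrict_mem hKm.compl] with x hx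
    rw [Real.norm_of_nonneg (hρ0 x)]
    have h1x : 1 ≤ V x := hKsub hx
    nlinarith [hρ0 x]
  have := hIK.union hIKc
  rwa [Set.union_compl_self, integrableOn_univ] at this

/-- The phase-space density associated to `ρ`. -/
def Mrho (ρ : E3 → ℝ) : E3 × E3 → ℝ := fun z => bump ((3*π^2*ρ z.1)^((1:ℝ)/3)) z.2

lemma Mrho_fiber (ρ : E3 → ℝ) (x : E3) :
    (fun p => Mrho ρ (x, p)) = bump ((3*π^2*ρ x)^((1:ℝ)/3)) := rfl

lemma Mrho_measurable {ρ : E3 → ℝ} (hρm : Measurable ρ) : Measurable (Mrho ρ) := by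
  have hset : MeasurableSet {z : E3 × E3 | ‖z.2‖ ≤ (3*π^2*ρ z.1)^((1:ℝ)/3)} := by
    apply measurableSet_le (measurable_snd.norm)
    exact (Real.continuous_rpow_const (by norm_num : (0:ℝ) ≤ 1/3)).measurable.comp
      ((measurable_const.mul hρm).comp measurable_fst)
  have : Mrho ρ = Set.indicator {z : E3 × E3 | ‖z.2‖ ≤ (3*π^2*ρ z.1)^((1:ℝ)/3)}
      (fun _ => (2:ℝ)) := by
    ext z
    by_cases hz : z ∈ {z : E3 × E3 | ‖z.2‖ ≤ (3*π^2*ρ z.1)^((1:ℝ)/3)}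
    · rw [Set.indicator_of_mem hz, Mrho, bump,
        Set.indicator_of_mem (by rw [Metric.mem_closedBall, dist_zero_right]; exact hz)]
    · rw [Set.indicator_of_notMem hz, Mrho, bump,
        Set.indicator_of_notMem (by rw [Metric.mem_closedBall, dist_zero_right]; exact hz)]
  rw [this]
  exact measurable_const.indicator hset

lemma bump_nonneg (r : ℝ) (p : E3) : 0 ≤ bump r p := by
  rw [bump]; by_cases hp : p ∈ Metric.closedBall (0:E3) r
  · rw [Set.indicator_of_mem hp]; norm_num
  · rw [Set.indicator_of_notMem hp]

lemma bump_le_two (r : ℝ) (p : E3) : bump r p ≤ 2 := by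
  rw [bump]; by_cases hp : p ∈ Metric.closedBall (0:E3) r
  · rw [Set.indicator_of_mem hp]
  · rw [Set.indicator_of_notMem hp]; norm_num

lemma Mrho_fiber_int (ρ : E3 → ℝ) (hρ0 : ∀ x, 0 ≤ ρ x) (x : E3) :
    ∫ p, Mrho ρ (x, p) = (2*π)^3 * ρ x := by
  rw [Mrho_fiber, bump_integral _ (rad_nonneg _ (hρ0 x)), const_mass _ (hρ0 x)]

lemma Mrho_fiber_energy_integrable (V ρ : E3 → ℝ) (x : E3) :
    Integrable (fun p : E3 => (‖p‖^2 + V x) * Mrho ρ (x, p)) volume := by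
  have : (fun p : E3 => (‖p‖^2 + V x) * Mrho ρ (x, p))
      = fun p => ‖p‖^2 * bump ((3*π^2*ρ x)^((1:ℝ)/3)) p
        + V x * bump ((3*π^2*ρ x)^((1:ℝ)/3)) p := by
    ext p; simp only [Mrho]; ring
  rw [this]
  exact (bump_sq_integrable _).add ((bump_integrable _).const_mul _)

lemma Mrho_fiber_energy (V ρ : E3 → ℝ) (hρ0 : ∀ x, 0 ≤ ρ x) (x : E3) :
    ∫ p, (‖p‖^2 + V x) * Mrho ρ (x, p)
      = (2*π)^3 * ((2:ℝ)^(-(2:ℝ)/3) * cTF * ρ x ^ ((5:ℝ)/3) + V x * ρ x) := by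
  have he : (fun p : E3 => (‖p‖^2 + V x) * Mrho ρ (x, p))
      = fun p => ‖p‖^2 * bump ((3*π^2*ρ x)^((1:ℝ)/3)) p
        + V x * bump ((3*π^2*ρ x)^((1:ℝ)/3)) p := by
    ext p; simp only [Mrho]; ring
  rw [he, integral_add (bump_sq_integrable _) ((bump_integrable _).const_mul _),
    integral_const_mul, bump_sq_integral _ (rad_nonneg _ (hρ0 x)),
    bump_integral _ (rad_nonneg _ (hρ0 x)), const_kin _ (hρ0 x), const_mass _ (hρ0 x)]
  ring

lemma Mrho_prod_integrable (V ρ : E3 → ℝ) (hρm : Measurable ρ) (hρ0 : ∀ x, 0 ≤ ρ x)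
    (hρi : Integrable ρ volume) : Integrable (Mrho ρ) (volume : Measure (E3 × E3)) := by
  rw [Measure.volume_eq_prod]
  refine (integrable_prod_iff (Mrho_measurable hρm).aestronglyMeasurable).mpr
    ⟨ae_of_all _ fun x => ?_, ?_⟩
  · rw [Mrho_fiber]; exact bump_integrable _
  · have : (fun x => ∫ p, ‖Mrho ρ (x, p)‖) = fun x => (2*π)^3 * ρ x := by
      ext x
      rw [← Mrho_fiber_int ρ hρ0 x]
      exact integral_congr_ae (ae_of_all _ fun p =>
        Real.norm_of_nonneg (bump_nonneg _ _))
    rw [this]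
    exact hρi.const_mul _

lemma Mrho_energy_integrable (V ρ : E3 → ℝ) (hVm : Measurable V) (hV0 : ∀ x, 0 ≤ V x)
    (hρm : Measurable ρ) (hρ0 : ∀ x, 0 ≤ ρ x)
    (h53 : Integrable (fun x => ρ x ^ ((5:ℝ)/3)) volume)
    (hVρ : Integrable (fun x => V x * ρ x) volume) :
    Integrable (fun z : E3 × E3 => (‖z.2‖^2 + V z.1) * Mrho ρ z)
      (volume : Measure (E3 × E3)) := by
  rw [Measure.volume_eq_prod]
  have hmeas : Measurable (fun z : E3 × E3 => (‖z.2‖^2 + V z.1) * Mrho ρ z) :=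
    (((measurable_snd.norm.pow measurable_const)).add (hVm.comp measurable_fst)).mul
      (Mrho_measurable hρm)
  refine (integrable_prod_iff hmeas.aestronglyMeasurable).mpr
    ⟨ae_of_all _ fun x => Mrho_fiber_energy_integrable V ρ x, ?_⟩
  have : (fun x => ∫ p, ‖(‖p‖^2 + V x) * Mrho ρ (x, p)‖)
      = fun x => (2*π)^3 * ((2:ℝ)^(-(2:ℝ)/3) * cTF * ρ x ^ ((5:ℝ)/3) + V x * ρ x) := by
    ext x
    rw [← Mrho_fiber_energy V ρ hρ0 x]
    refine integral_congr_ae (ae_of_all _ fun p => Real.norm_of_nonneg ?_)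
    exact mul_nonneg (add_nonneg (by positivity) (hV0 x)) (bump_nonneg _ _)
  rw [this]
  exact (((h53.const_mul _).add hVρ).const_mul _)

lemma TFfun_mem_vlasov (V ρ : E3 → ℝ) (hVm : Measurable V) (hV0 : ∀ x, 0 ≤ V x)
    (hVinf : Tendsto V (cocompact E3) atTop)
    (h : IsTFAdmissible V ρ) : TFfun V ρ ∈ vlasovSet V := by
  have hρi := rho_integrable hVinf h
  have h53 := rho53_integrable h
  obtain ⟨hρm, hρ0, hρp, hVρ, hmass⟩ := h
  refine ⟨Mrho ρ, Mrho_measurable hρm, ae_of_all _ fun z =>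
    ⟨bump_nonneg _ _, bump_le_two _ _⟩,
    Mrho_prod_integrable V ρ hρm hρ0 hρi,
    Mrho_energy_integrable V ρ hVm hV0 hρm hρ0 h53 hVρ, ?_, ?_⟩
  · have hint : Integrable (Mrho ρ) ((volume : Measure E3).prod volume) := by
      rw [← Measure.volume_eq_prod]; exact Mrho_prod_integrable V ρ hρm hρ0 hρi
    have : ∫ z, Mrho ρ z = (2*π)^3 := by
      rw [Measure.volume_eq_prod, integral_prod _ hint]
      simp_rw [Mrho_fiber_int ρ hρ0]
      rw [integral_const_mul, hmass, mul_one]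
    rw [this]
    field_simp
  · have hint : Integrable (fun z : E3 × E3 => (‖z.2‖^2 + V z.1) * Mrho ρ z)
        ((volume : Measure E3).prod volume) := by
      rw [← Measure.volume_eq_prod]
      exact Mrho_energy_integrable V ρ hVm hV0 hρm hρ0 h53 hVρ
    have : ∫ z : E3 × E3, (‖z.2‖^2 + V z.1) * Mrho ρ z = (2*π)^3 * TFfun V ρ := by
      rw [Measure.volume_eq_prod, integral_prod _ hint]
      simp_rw [Mrho_fiber_energy V ρ hρ0]
      rw [integral_const_mul, integral_add (h53.const_mul _) hVρ, integral_const_mul, TFfun]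
    rw [this]
    field_simp

lemma vlasov_to_TF (V : E3 → ℝ) (hVm : Measurable V) (hV0 : ∀ x, 0 ≤ V x)
    {e : ℝ} (he : e ∈ vlasovSet V) :
    ∃ ρ : E3 → ℝ, IsTFAdmissible V ρ ∧ TFfun V ρ ≤ e := by
  obtain ⟨m, hmm, hm02, hmi, hei, hmass, rfl⟩ := he
  rw [Measure.volume_eq_prod] at hmi hei hm02
  set c : ℝ := ((2*π)^3)⁻¹ with hc_def
  have hc : 0 < c := by positivity
  have hc1 : c * (2*π)^3 = 1 := by rw [hc_def]; field_simp
  have ha : 0 < (2:ℝ)^(-(2:ℝ)/3) * cTF := aTF_pos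
  set ρ : E3 → ℝ := fun x => max (c * ∫ p, m (x, p)) 0 with hρ_def
  have hρm : Measurable ρ :=
    ((hmm.stronglyMeasurable.integral_prod_right'.measurable.const_mul c).max
      measurable_const)
  have hρ0 : ∀ x, 0 ≤ ρ x := fun x => le_max_right _ _
  have hfib02 := Measure.ae_ae_of_ae_prod hm02
  have hfib_int := hmi.prod_right_ae
  have hfib_eint := hei.prod_right_ae
  -- a.e. identification of ρ and the key pointwise inequality
  have hρ_eq : ∀ᵐ x ∂(volume : Measure E3),
      ρ x = c * ∫ p, m (x, p) := by
    filter_upwards [hfib02] with x h02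
    exact max_eq_left (mul_nonneg hc.le (integral_nonneg_of_ae
      (h02.mono fun p hp => hp.1)))
  have hkey : ∀ᵐ x ∂(volume : Measure E3),
      (2:ℝ)^(-(2:ℝ)/3) * cTF * ρ x ^ ((5:ℝ)/3) + V x * ρ x
        ≤ c * ∫ p, (‖p‖^2 + V x) * m (x, p) := by
    filter_upwards [hfib02, hfib_int, hfib_eint, hρ_eq] with x h02 hint heint hρx
    set g : E3 → ℝ := fun p => m (x, p) with hg_def
    have hkin : Integrable (fun p : E3 => ‖p‖^2 * g p) volume := by
      have h1 := heint.sub (hint.const_mul (V x))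
      refine h1.congr (ae_of_all _ fun p => ?_)
      simp only [Pi.sub_apply]
      ring
    have hM0 : 0 ≤ ∫ p, g p :=
      integral_nonneg_of_ae (h02.mono fun p hp => hp.1)
    have hmass' : ∫ p, g p = 2*(4/3*π*((3*π^2*ρ x)^((1:ℝ)/3))^3) := by
      rw [const_mass _ (hρ0 x), hρx, ← mul_assoc, mul_comm ((2*π)^3) c, hc1, one_mul]
    have hbt := bathtub g hint h02 hkin _ (rad_nonneg _ (hρ0 x)) hmass'
    rw [const_kin _ (hρ0 x)] at hbt
    have hsplit : ∫ p, (‖p‖^2 + V x) * g p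
        = (∫ p, ‖p‖^2 * g p) + V x * ∫ p, g p := by
      have : (fun p : E3 => (‖p‖^2 + V x) * g p)
          = fun p : E3 => ‖p‖^2 * g p + V x * g p := by ext p; ring
      rw [this, integral_add hkin (hint.const_mul (V x)), integral_const_mul]
    have hVxρ : V x * ρ x = c * (V x * ∫ p, g p) := by rw [hρx]; ring
    calc (2:ℝ)^(-(2:ℝ)/3) * cTF * ρ x ^ ((5:ℝ)/3) + V x * ρ x
        = c * ((2*π)^3 * ((2:ℝ)^(-(2:ℝ)/3) * cTF * ρ x ^ ((5:ℝ)/3))) + c * (V x * ∫ p, g p) := by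
          linear_combination hVxρ + (-((2:ℝ)^(-(2:ℝ)/3) * cTF * ρ x ^ ((5:ℝ)/3))) * hc1
      _ ≤ c * (∫ p, ‖p‖^2 * g p) + c * (V x * ∫ p, g p) := by
          exact add_le_add_left (mul_le_mul_of_nonneg_left hbt hc.le) _
      _ = c * ∫ p, (‖p‖^2 + V x) * g p := by rw [hsplit]; ring
  -- integrability of ρ^{5/3}
  have hF_int : Integrable (fun x => ∫ p, (‖p‖^2 + V x) * m (x, p)) volume :=
    hei.integral_prod_left
  have hρ53m : Measurable (fun x => ρ x ^ ((5:ℝ)/3)) :=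
    (Real.continuous_rpow_const (by norm_num : (0:ℝ) ≤ 5/3)).measurable.comp hρm
  have hI53 : Integrable (fun x => ρ x ^ ((5:ℝ)/3)) volume := by
    refine Integrable.mono' ((hF_int.const_mul c).const_mul ((2:ℝ)^(-(2:ℝ)/3) * cTF)⁻¹)
      hρ53m.aestronglyMeasurable ?_
    filter_upwards [hkey] with x hx
    rw [Real.norm_of_nonneg (Real.rpow_nonneg (hρ0 x) _)]
    have h1 : 0 ≤ V x * ρ x := mul_nonneg (hV0 x) (hρ0 x)
    have h2 : (2:ℝ)^(-(2:ℝ)/3) * cTF * ρ x ^ ((5:ℝ)/3)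
        ≤ c * ∫ p, (‖p‖^2 + V x) * m (x, p) := by linarith
    have h3 := mul_le_mul_of_nonneg_left h2 (inv_nonneg.mpr ha.le)
    rwa [← mul_assoc, inv_mul_cancel₀ ha.ne', one_mul] at h3
  have hMem : MemLp ρ (5/3) volume := (memLp53_iff ρ hρm hρ0).mpr hI53
  -- integrability of V·ρ
  have hW : Integrable (fun z : E3 × E3 => V z.1 * m z)
      ((volume : Measure E3).prod volume) := by
    refine Integrable.mono' hei ((hVm.comp measurable_fst).mul hmm).aestronglyMeasurable ?_
    filter_upwards [hm02] with z hz
    rw [Real.norm_of_nonneg (mul_nonneg (hV0 z.1) hz.1)]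
    nlinarith [sq_nonneg ‖z.2‖, hz.1]
  have hVρInt : Integrable (fun x => V x * ρ x) volume := by
    refine ((hW.integral_prod_left).const_mul c).congr ?_
    filter_upwards [hρ_eq] with x hρx
    rw [hρx, integral_const_mul]
    ring
  -- total mass one
  have hmass1 : (∫ x, ρ x) = 1 := by
    rw [integral_congr_ae hρ_eq, integral_const_mul, ← integral_prod _ hmi]
    exact hmass
  refine ⟨ρ, ⟨hρm, hρ0, hMem, hVρInt, hmass1⟩, ?_⟩
  have hgoal : TFfun V ρ ≤ ∫ x, c * ∫ p, (‖p‖^2 + V x) * m (x, p) := by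
    have hTF : TFfun V ρ = ∫ x, ((2:ℝ)^(-(2:ℝ)/3) * cTF * ρ x ^ ((5:ℝ)/3) + V x * ρ x) := by
      rw [TFfun, integral_add (hI53.const_mul ((2:ℝ)^(-(2:ℝ)/3) * cTF)) hVρInt, integral_const_mul]
    rw [hTF]
    have := integral_mono_ae ((hI53.const_mul ((2:ℝ)^(-(2:ℝ)/3) * cTF)).add hVρInt)
      (hF_int.const_mul c) hkey
    simpa using this
  calc TFfun V ρ ≤ ∫ x, c * ∫ p, (‖p‖^2 + V x) * m (x, p) := hgoal
    _ = c * ∫ z : E3 × E3, (‖z.2‖^2 + V z.1) * m z := by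
        rw [integral_const_mul]
        exact congrArg (fun t => c * t) (integral_prod _ hei).symm

/-- An explicit admissible density: normalized indicator of the unit ball. -/
lemma exists_TFAdmissible (V : E3 → ℝ) (hVm : Measurable V) (hVloc : LocBounded V) :
    ∃ ρ : E3 → ℝ, IsTFAdmissible V ρ := by
  set B : Set E3 := Metric.closedBall 0 1 with hB_def
  set κ : ℝ := (4/3*π)⁻¹ with hκ_def
  have hκ0 : 0 ≤ κ := by rw [hκ_def]; positivity
  have hBm : MeasurableSet B := measurableSet_closedBall
  have hvol : volume B = ENNReal.ofReal (4/3*π) := by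
    rw [hB_def, vol_ball3]; norm_num
  have hvolne : volume B ≠ ⊤ := by rw [hvol]; exact ENNReal.ofReal_ne_top
  refine ⟨B.indicator (fun _ => κ), measurable_const.indicator hBm, ?_, ?_, ?_, ?_⟩
  · intro x
    by_cases hx : x ∈ B
    · rw [Set.indicator_of_mem hx]; exact hκ0
    · rw [Set.indicator_of_notMem hx]
  · exact memLp_indicator_const _ hBm κ (Or.inr hvolne)
  · obtain ⟨C, hC⟩ := hVloc B (isCompact_closedBall _ _)
    refine Integrable.mono'
      (g := B.indicator (fun _ => C * κ))
      ((integrableOn_const hvolne).integrable_indicator hBm)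
      (hVm.mul (measurable_const.indicator hBm)).aestronglyMeasurable
      (ae_of_all _ fun x => ?_)
    by_cases hx : x ∈ B
    · rw [Set.indicator_of_mem hx, Set.indicator_of_mem hx, Real.norm_eq_abs, abs_mul,
        abs_of_nonneg hκ0]
      exact mul_le_mul_of_nonneg_right (hC x hx) hκ0
    · rw [Set.indicator_of_notMem hx, Set.indicator_of_notMem hx, mul_zero, norm_zero]
  · rw [MeasureTheory.integral_indicator_const _ hBm, measureReal_def, hvol,
      ENNReal.toReal_ofReal (by positivity), smul_eq_mul, hκ_def]
    field_simp

lemma TF_set_nonempty (V : E3 → ℝ) (hVm : Measurable V) (hVloc : LocBounded V) :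
    { e | ∃ ρ, IsTFAdmissible V ρ ∧ e = TFfun V ρ }.Nonempty := by
  obtain ⟨ρ, hρ⟩ := exists_TFAdmissible V hVm hVloc
  exact ⟨TFfun V ρ, ρ, hρ, rfl⟩

lemma TF_set_bddBelow (V : E3 → ℝ) (hV0 : ∀ x, 0 ≤ V x) :
    BddBelow { e | ∃ ρ, IsTFAdmissible V ρ ∧ e = TFfun V ρ } := by
  refine ⟨0, fun e he => ?_⟩
  obtain ⟨ρ, ⟨_, hρ0, _, _, _⟩, rfl⟩ := he
  have h1 : 0 ≤ ∫ x, ρ x ^ ((5:ℝ)/3) :=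
    integral_nonneg fun x => Real.rpow_nonneg (hρ0 x) _
  have h2 : 0 ≤ ∫ x, V x * ρ x :=
    integral_nonneg fun x => mul_nonneg (hV0 x) (hρ0 x)
  have := aTF_pos
  rw [TFfun]
  nlinarith

lemma vlasov_set_bddBelow (V : E3 → ℝ) (hV0 : ∀ x, 0 ≤ V x) :
    BddBelow (vlasovSet V) := by
  refine ⟨0, fun e he => ?_⟩
  obtain ⟨m, hmm, hm02, hmi, hei, hmass, rfl⟩ := he
  have h1 : 0 ≤ ∫ z : E3 × E3, (‖z.2‖^2 + V z.1) * m z := by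
    refine integral_nonneg_of_ae ?_
    filter_upwards [hm02] with z hz
    exact mul_nonneg (add_nonneg (by positivity) (hV0 z.1)) hz.1
  positivity


end AuxTFVlasov

/-- **Thomas–Fermi energy equals Vlasov energy**: `E^TF = E^V`. -/
theorem TF_energy_eq_vlasov_energy
    (V : E3 → ℝ) (hVm : Measurable V) (hVloc : LocBounded V)
    (hV0 : ∀ x, 0 ≤ V x) (hVinf : Tendsto V (cocompact E3) atTop) :
    TFenergy V = sInf (vlasovSet V) := by
  obtain ⟨ρ₀, hρ₀⟩ := exists_TFAdmissible V hVm hVloc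
  have hvne : (vlasovSet V).Nonempty :=
    ⟨TFfun V ρ₀, TFfun_mem_vlasov V ρ₀ hVm hV0 hVinf hρ₀⟩
  rw [TFenergy]
  apply le_antisymm
  · refine le_csInf hvne fun b hb => ?_
    obtain ⟨ρ, hAdm, hle⟩ := vlasov_to_TF V hVm hV0 hb
    exact csInf_le_of_le (TF_set_bddBelow V hV0) ⟨ρ, hAdm, rfl⟩ hle
  · refine le_csInf (TF_set_nonempty V hVm hVloc) ?_
    rintro b ⟨ρ, hAdm, rfl⟩
    exact csInf_le (vlasov_set_bddBelow V hV0) (TFfun_mem_vlasov V ρ hVm hV0 hVinf hAdm)
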